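/- Let A : ℝ → M_n(ℂ) be continuous, g : ℝ → GL_n(ℂ) continuously differentiable, and define A'(t) = g(t)⁻¹A(t)g(t) + g(t)⁻¹g'(t). Let P_A(r,s) and P_{A'}(r,s) denote the path-ordered exponentials (Dyson series) of A and A' respectively. Then for all r ≤ s, g(r) · P_{A'}(r,s) = P_A(r,s) · g(s). -/

import Mathlib

/-!
As functions of `s`, both sides solve the linear equation `X' = X A'` with `X(r) = g(r)`.
For the left side this is because `P_A(r, ·)` solves `P' = P A`, `P(r) = 1`: the `(k+1)`-st
term of the Dyson series is the integral of the `k`-th term times `A` (Fubini along the last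
coordinate of the simplex), and the series converges uniformly on compacts by the bound
`‖1‖ (C (s - r))^k / k!`. For the right side, the product rule gives
`(P_A g)' = P_A A g + P_A g' = (P_A g) A'`. Uniqueness for linear equations (Gronwall) concludes.
-/

open MeasureTheory

attribute [local instance] Matrix.linftyOpNormedAddCommGroup Matrix.linftyOpNormedRing
  Matrix.linftyOpNormedAlgebra

/-- The ordered simplex `Δ^k_{[r,s]} = {r ≤ t₁ ≤ ⋯ ≤ t_k ≤ s}` in `ℝ^k`. -/
def orderedSimplex (r s : ℝ) (k : ℕ) : Set (Fin k → ℝ) :=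
  {t | Monotone t ∧ ∀ i, t i ∈ Set.Icc r s}

/-- The iterated integral `∫_{r ≤ t₁ ≤ ⋯ ≤ t_k ≤ s} A(t₁)⋯A(t_k) dt` (path-ordered). -/
noncomputable def simplexIntegralM (n : ℕ) (A : ℝ → Matrix (Fin n) (Fin n) ℂ)
    (r s : ℝ) (k : ℕ) : Matrix (Fin n) (Fin n) ℂ :=
  ∫ t in orderedSimplex r s k, (List.ofFn fun i => A (t i)).prod

/-- The path-ordered exponential (Dyson series) of `A`. -/
noncomputable def pathOrderedExp (n : ℕ) (A : ℝ → Matrix (Fin n) (Fin n) ℂ)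
    (r s : ℝ) : Matrix (Fin n) (Fin n) ℂ :=
  ∑' k : ℕ, simplexIntegralM n A r s k

open Set Filter Topology

theorem Fin.monotone_snoc_iff {α : Type*} [Preorder α] {k : ℕ} {t : Fin k → α} {u : α} :
    Monotone (Fin.snoc t u : Fin (k + 1) → α) ↔ Monotone t ∧ ∀ i, t i ≤ u := by
  constructor
  · intro h
    exact ⟨fun i j hij => by simpa using h (Fin.castSucc_le_castSucc_iff.2 hij),
      fun i => by simpa using h (Fin.le_last i.castSucc)⟩
  · rintro ⟨ht, hu⟩ a b hab
    induction b using Fin.lastCases with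
    | last =>
      induction a using Fin.lastCases with
      | last => exact le_rfl
      | cast i => simpa using hu i
    | cast j =>
      induction a using Fin.lastCases with
      | last => exact absurd hab (not_le.2 (Fin.castSucc_lt_last j))
      | cast i => simpa using ht (Fin.castSucc_le_castSucc_iff.1 hab)

theorem continuous_list_ofFn_prod {X M : Type*} [TopologicalSpace X] [Monoid M]
    [TopologicalSpace M] [ContinuousMul M] {k : ℕ} {f : Fin k → X → M}
    (hf : ∀ i, Continuous (f i)) : Continuous fun x => (List.ofFn fun i => f i x).prod := by
  simp only [List.ofFn_eq_map]
  exact continuous_list_prod _ fun i _ => hf i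

theorem Continuous.matrix_inv_of_isUnit {X 𝕜 ι : Type*} [TopologicalSpace X] [NormedField 𝕜]
    [Fintype ι] [DecidableEq ι] {g : X → Matrix ι ι 𝕜} (hg : Continuous g)
    (hunit : ∀ x, IsUnit (g x)) : Continuous fun x => (g x)⁻¹ :=
  continuous_iff_continuousAt.2 fun x =>
    (continuousAt_matrix_inv _ (NormedRing.inverse_continuousAt
      ((Matrix.isUnit_iff_isUnit_det _).1 (hunit x)).unit)).comp hg.continuousAt

theorem eqOn_Icc_of_hasDerivWithinAt_mul_right {E : Type*} [NormedRing E] [NormedSpace ℝ E]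
    {a b : ℝ} {B f g : ℝ → E} (hB : ContinuousOn B (Icc a b))
    (hf : ContinuousOn f (Icc a b)) (hf' : ∀ t ∈ Ico a b, HasDerivWithinAt f (f t * B t) (Ici t) t)
    (hg : ContinuousOn g (Icc a b)) (hg' : ∀ t ∈ Ico a b, HasDerivWithinAt g (g t * B t) (Ici t) t)
    (ha : f a = g a) : EqOn f g (Icc a b) := by
  obtain ⟨C, hC⟩ := isCompact_Icc.exists_bound_of_continuousOn hB
  have hlip : ∀ t ∈ Ico a b, LipschitzWith C.toNNReal (· * B t) := fun t ht =>
    LipschitzWith.of_dist_le_mul fun x y => by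
      rw [dist_eq_norm, dist_eq_norm, ← sub_mul, Real.coe_toNNReal']
      exact (norm_mul_le _ _).trans (by
        rw [mul_comm]
        gcongr
        exact (hC t (Ico_subset_Icc_self ht)).trans (le_max_left _ _))
  exact ODE_solution_unique_of_mem_Icc_right (s := fun _ => univ)
    (fun t ht => (hlip t ht).lipschitzOnWith) hf hf' (fun _ _ => trivial) hg hg'
    (fun _ _ => trivial) ha

section OrderedSimplex

theorem orderedSimplex_eq_inter_pi (r s : ℝ) (k : ℕ) :
    orderedSimplex r s k = {t | Monotone t} ∩ univ.pi fun _ => Icc r s := by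
  ext t
  exact and_congr_right fun _ => mem_univ_pi.symm

theorem isCompact_orderedSimplex (r s : ℝ) (k : ℕ) : IsCompact (orderedSimplex r s k) := by
  rw [orderedSimplex_eq_inter_pi]
  exact (isCompact_univ_pi fun _ => isCompact_Icc).inter_left isClosed_monotone

theorem measurableSet_orderedSimplex (r s : ℝ) (k : ℕ) : MeasurableSet (orderedSimplex r s k) :=
  (isCompact_orderedSimplex r s k).isClosed.measurableSet

theorem snoc_mem_orderedSimplex_iff {r s u : ℝ} {k : ℕ} {t : Fin k → ℝ} :
    Fin.snoc t u ∈ orderedSimplex r s (k + 1) ↔ u ∈ Icc r s ∧ t ∈ orderedSimplex r u k := by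
  simp only [orderedSimplex, mem_ofPred_eq, Fin.monotone_snoc_iff, Fin.forall_fin_succ',
    Fin.snoc_castSucc, Fin.snoc_last, mem_Icc]
  constructor
  · rintro ⟨⟨hmono, hle⟩, hmem, hu⟩
    exact ⟨hu, hmono, fun i => ⟨(hmem i).1, hle i⟩⟩
  · rintro ⟨hu, hmono, hmem⟩
    exact ⟨⟨hmono, fun i => (hmem i).2⟩, fun i => ⟨(hmem i).1, (hmem i).2.trans hu.2⟩, hu⟩

theorem setIntegral_orderedSimplex_succ {E : Type*} [NormedAddCommGroup E] [NormedSpace ℝ E]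
    {r s : ℝ} {k : ℕ} {F : (Fin (k + 1) → ℝ) → E}
    (hF : IntegrableOn F (orderedSimplex r s (k + 1))) :
    ∫ t in orderedSimplex r s (k + 1), F t =
      ∫ u in Icc r s, ∫ t in orderedSimplex r u k, F (Fin.snoc t u) := by
  let e := (MeasurableEquiv.piFinSuccAbove (fun _ : Fin (k + 1) => ℝ) (Fin.last k)).symm
  have he : MeasurePreserving e := (volume_preserving_piFinSuccAbove _ _).symm _
  have he_apply : ∀ p, e p = Fin.snoc p.2 p.1 := fun p => by
    simp [e, MeasurableEquiv.piFinSuccAbove, Fin.insertNthEquiv, Fin.insertNth_last']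
  set T := e ⁻¹' orderedSimplex r s (k + 1)
  have hT : MeasurableSet T := e.measurable (measurableSet_orderedSimplex r s (k + 1))
  have hmemT : ∀ u t, (u, t) ∈ T ↔ u ∈ Icc r s ∧ t ∈ orderedSimplex r u k := fun u t => by
    simp only [T, mem_preimage, he_apply, snoc_mem_orderedSimplex_iff]
  have hint : Integrable (T.indicator fun p => F (e p)) (volume.prod volume) :=
    (integrable_indicator_iff hT).2 ((he.integrableOn_comp_preimage e.measurableEmbedding).2 hF)
  calc ∫ t in orderedSimplex r s (k + 1), F t = ∫ p in T, F (e p) :=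
        (he.setIntegral_preimage_emb e.measurableEmbedding F _).symm
    _ = ∫ u, ∫ t, T.indicator (fun p => F (e p)) (u, t) := by
        rw [← integral_indicator hT, Measure.volume_eq_prod, integral_prod _ hint]
    _ = ∫ u, (Icc r s).indicator (fun u => ∫ t in orderedSimplex r u k, F (Fin.snoc t u)) u := by
        congr 1
        funext u
        by_cases hu : u ∈ Icc r s
        · rw [indicator_of_mem hu, ← integral_indicator (measurableSet_orderedSimplex r u k)]
          congr 1
          funext t
          by_cases ht : t ∈ orderedSimplex r u k
          · rw [indicator_of_mem ((hmemT u t).2 ⟨hu, ht⟩), indicator_of_mem ht, he_apply]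
          · rw [indicator_of_notMem (fun h => ht ((hmemT u t).1 h).2), indicator_of_notMem ht]
        · simp [hmemT, hu]
    _ = ∫ u in Icc r s, ∫ t in orderedSimplex r u k, F (Fin.snoc t u) :=
        integral_indicator measurableSet_Icc

end OrderedSimplex

section PathOrderedExp

variable {n : ℕ} {A : ℝ → Matrix (Fin n) (Fin n) ℂ}

/- The norm on matrices is only a local instance, so the instances derived from it that
measure theory needs are not found automatically. -/
instance : TopologicalSpace.PseudoMetrizableSpace (Matrix (Fin n) (Fin n) ℂ) :=
  TopologicalSpace.pseudoMetrizableSpace_pi (A := fun _ : Fin n => Fin n → ℂ)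

noncomputable instance : ENormedAddMonoid (Matrix (Fin n) (Fin n) ℂ) :=
  NormedAddGroup.toENormedAddMonoid

theorem simplexIntegralM_zero (A : ℝ → Matrix (Fin n) (Fin n) ℂ) (r s : ℝ) :
    simplexIntegralM n A r s 0 = 1 := by
  have : orderedSimplex r s 0 = univ := eq_univ_of_forall fun t =>
    ⟨fun a => a.elim0, fun i => i.elim0⟩
  simp [simplexIntegralM, this, measureReal_def, volume_pi]

theorem simplexIntegralM_succ (hA : Continuous A) (r s : ℝ) (k : ℕ) :
    simplexIntegralM n A r s (k + 1) = ∫ u in Icc r s, simplexIntegralM n A r u k * A u := by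
  have hprod : ∀ (j : ℕ) (a b : ℝ), IntegrableOn
      (fun t : Fin j → ℝ => (List.ofFn fun i => A (t i)).prod) (orderedSimplex a b j) :=
    fun j a b => (continuous_list_ofFn_prod fun i => hA.comp (continuous_apply i)).continuousOn
      |>.integrableOn_compact (isCompact_orderedSimplex a b j)
  rw [simplexIntegralM, setIntegral_orderedSimplex_succ (hprod (k + 1) r s)]
  refine setIntegral_congr_fun measurableSet_Icc fun u _ => ?_
  simp only [List.ofFn_succ', List.prod_concat, Fin.snoc_castSucc, Fin.snoc_last]
  exact integral_mul_const_of_integrable (hprod k r u)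

theorem simplexIntegralM_succ_of_le (hA : Continuous A) {r s : ℝ} (hrs : r ≤ s) (k : ℕ) :
    simplexIntegralM n A r s (k + 1) = ∫ u in r..s, simplexIntegralM n A r u k * A u := by
  rw [simplexIntegralM_succ hA, intervalIntegral.integral_of_le hrs, integral_Icc_eq_integral_Ioc]

theorem continuous_simplexIntegralM (hA : Continuous A) (r : ℝ) (k : ℕ) :
    Continuous fun s => simplexIntegralM n A r s k := by
  induction k with
  | zero => simpa [simplexIntegralM_zero] using continuous_const
  | succ k ih =>
    have heq : (fun s => simplexIntegralM n A r s (k + 1)) =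
        fun s => ∫ u in r..max r s, simplexIntegralM n A r u k * A u := by
      funext s
      rw [simplexIntegralM_succ hA, intervalIntegral.integral_of_le (le_max_left _ _),
        integral_Icc_eq_integral_Ioc]
      congr 2
      ext x
      simp only [mem_Ioc, le_max_iff]
      grind
    rw [heq]
    exact (intervalIntegral.continuous_primitive (fun a b => (ih.mul hA).intervalIntegrable a b)
      r).comp (continuous_const.max continuous_id)

theorem norm_simplexIntegralM_le (hA : Continuous A) {r x C : ℝ} (hrx : r ≤ x)
    (hC : ∀ v ∈ Icc r x, ‖A v‖ ≤ C) (k : ℕ) :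
    ‖simplexIntegralM n A r x k‖ ≤
      ‖(1 : Matrix (Fin n) (Fin n) ℂ)‖ * ((C * (x - r)) ^ k / k.factorial) := by
  induction k generalizing x with
  | zero => simp [simplexIntegralM_zero]
  | succ k ih =>
    have hbound : ∀ v ∈ Ioc r x, ‖simplexIntegralM n A r v k * A v‖ ≤
        ‖(1 : Matrix (Fin n) (Fin n) ℂ)‖ * C ^ (k + 1) / k.factorial * (v - r) ^ k := by
      intro v hv
      have hCv : ∀ w ∈ Icc r v, ‖A w‖ ≤ C := fun w hw => hC w ⟨hw.1, hw.2.trans hv.2⟩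
      calc ‖simplexIntegralM n A r v k * A v‖
          ≤ ‖simplexIntegralM n A r v k‖ * ‖A v‖ := norm_mul_le _ _
        _ ≤ ‖(1 : Matrix (Fin n) (Fin n) ℂ)‖ * ((C * (v - r)) ^ k / k.factorial) * C :=
          mul_le_mul (ih hv.1.le hCv) (hC v ⟨hv.1.le, hv.2⟩) (norm_nonneg _)
            ((norm_nonneg _).trans (ih hv.1.le hCv))
        _ = _ := by rw [mul_pow]; ring
    have hcont : Continuous fun v : ℝ =>
        ‖(1 : Matrix (Fin n) (Fin n) ℂ)‖ * C ^ (k + 1) / k.factorial * (v - r) ^ k := by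
      fun_prop
    rw [simplexIntegralM_succ_of_le hA hrx]
    refine (intervalIntegral.norm_integral_le_of_norm_le hrx (ae_of_all _ hbound)
      (hcont.intervalIntegrable r x)).trans (le_of_eq ?_)
    rw [intervalIntegral.integral_const_mul, intervalIntegral.integral_comp_sub_right
      (fun v => v ^ k), integral_pow, Nat.factorial_succ, mul_pow]
    push_cast
    field_simp
    ring

theorem norm_simplexIntegralM_le_of_mem_Icc (hA : Continuous A) {r b x C : ℝ}
    (hC : ∀ v ∈ Icc r b, ‖A v‖ ≤ C) (hx : x ∈ Icc r b) (k : ℕ) :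
    ‖simplexIntegralM n A r x k‖ ≤
      ‖(1 : Matrix (Fin n) (Fin n) ℂ)‖ * ((C * (b - r)) ^ k / k.factorial) := by
  have hC0 : 0 ≤ C := (norm_nonneg _).trans (hC r ⟨le_rfl, hx.1.trans hx.2⟩)
  refine (norm_simplexIntegralM_le hA hx.1 (fun v hv => hC v ⟨hv.1, hv.2.trans hx.2⟩) k).trans ?_
  have hxr : 0 ≤ x - r := sub_nonneg.2 hx.1
  gcongr
  exact hx.2

theorem summable_simplexIntegralM (hA : Continuous A) {r x : ℝ} (hrx : r ≤ x) :
    Summable fun k => simplexIntegralM n A r x k := by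
  obtain ⟨C, hC⟩ := isCompact_Icc.exists_bound_of_continuousOn (s := Icc r x) hA.continuousOn
  exact .of_norm_bounded ((Real.summable_pow_div_factorial _).mul_left _)
    fun k => norm_simplexIntegralM_le_of_mem_Icc hA hC ⟨hrx, le_rfl⟩ k

theorem continuousOn_pathOrderedExp (hA : Continuous A) (r b : ℝ) :
    ContinuousOn (fun x => pathOrderedExp n A r x) (Icc r b) := by
  obtain ⟨C, hC⟩ := isCompact_Icc.exists_bound_of_continuousOn (s := Icc r b) hA.continuousOn
  exact continuousOn_tsum (fun k => (continuous_simplexIntegralM hA r k).continuousOn)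
    ((Real.summable_pow_div_factorial _).mul_left _)
    fun k x hx => norm_simplexIntegralM_le_of_mem_Icc hA hC hx k

theorem pathOrderedExp_eq_one_add_integral (hA : Continuous A) {r x : ℝ} (hrx : r ≤ x) :
    pathOrderedExp n A r x = 1 + ∫ v in r..x, pathOrderedExp n A r v * A v := by
  obtain ⟨C, hC⟩ := isCompact_Icc.exists_bound_of_continuousOn (s := Icc r x) hA.continuousOn
  have hsum : HasSum (fun k => simplexIntegralM n A r x (k + 1))
      (∫ v in r..x, pathOrderedExp n A r v * A v) := by
    simp_rw [simplexIntegralM_succ_of_le hA hrx]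
    refine intervalIntegral.hasSum_integral_of_dominated_convergence
      (fun k _ => ‖(1 : Matrix (Fin n) (Fin n) ℂ)‖ * ((C * (x - r)) ^ k / k.factorial) * C)
      (fun k => ((continuous_simplexIntegralM hA r k).mul hA).aestronglyMeasurable)
      (fun k => ae_of_all _ fun v hv => ?_)
      (ae_of_all _ fun _ _ => ((Real.summable_pow_div_factorial _).mul_left _).mul_right _)
      intervalIntegrable_const (ae_of_all _ fun v hv => ?_)
    · rw [uIoc_of_le hrx] at hv
      have hvIcc : v ∈ Icc r x := ⟨hv.1.le, hv.2⟩
      exact (norm_mul_le _ _).trans (mul_le_mul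
        (norm_simplexIntegralM_le_of_mem_Icc hA hC hvIcc k) (hC v hvIcc) (norm_nonneg _)
        ((norm_nonneg _).trans (norm_simplexIntegralM_le_of_mem_Icc hA hC hvIcc k)))
    · rw [uIoc_of_le hrx] at hv
      exact (summable_simplexIntegralM hA hv.1.le).hasSum.mul_right (A v)
  rw [pathOrderedExp, ((hasSum_nat_add_iff 1).1 hsum).tsum_eq]
  simp [simplexIntegralM_zero, add_comm]

theorem pathOrderedExp_self (hA : Continuous A) (r : ℝ) : pathOrderedExp n A r r = 1 := by
  simpa using pathOrderedExp_eq_one_add_integral hA (le_refl r)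

theorem hasDerivWithinAt_pathOrderedExp (hA : Continuous A) {r t : ℝ} (hrt : r ≤ t) :
    HasDerivWithinAt (fun x => pathOrderedExp n A r x) (pathOrderedExp n A r t * A t)
      (Ici t) t := by
  have hf : ContinuousOn (fun v => pathOrderedExp n A r v * A v) (Icc r (t + 1)) :=
    (continuousOn_pathOrderedExp hA r (t + 1)).mul hA.continuousOn
  have hnhds : Icc r (t + 1) ∈ 𝓝[>] t :=
    mem_of_superset (Ioo_mem_nhdsGT (lt_add_one t)) fun v hv => ⟨hrt.trans hv.1.le, hv.2.le⟩
  have hint : IntervalIntegrable (fun v => pathOrderedExp n A r v * A v) volume r t :=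
    (hf.mono (by rw [uIcc_of_le hrt]; exact Icc_subset_Icc_right (by linarith))).intervalIntegrable
  have hderiv := intervalIntegral.integral_hasDerivWithinAt_right (s := Ici t) hint
    ⟨_, hnhds, hf.aestronglyMeasurable measurableSet_Icc⟩
    ((hf t ⟨hrt, by linarith⟩).mono_of_mem_nhdsWithin hnhds)
  exact (hderiv.const_add 1).congr
    (fun x hx => pathOrderedExp_eq_one_add_integral hA (hrt.trans hx))
    (pathOrderedExp_eq_one_add_integral hA hrt)

end PathOrderedExp

/-- Gauge transformation property of parallel transport: if
`A' = g⁻¹Ag + g⁻¹g'`, then `g(r) · P_{A'}(r,s) = P_A(r,s) · g(s)` for all `r ≤ s`. -/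
theorem pathOrderedExp_gauge (n : ℕ) (A : ℝ → Matrix (Fin n) (Fin n) ℂ)
    (hA : Continuous A) (g g' : ℝ → Matrix (Fin n) (Fin n) ℂ)
    (hg : ∀ t, HasDerivAt g (g' t) t) (hg' : Continuous g')
    (hunit : ∀ t, IsUnit (g t)) (r s : ℝ) (hrs : r ≤ s) :
    g r * pathOrderedExp n (fun t => (g t)⁻¹ * A t * g t + (g t)⁻¹ * g' t) r s =
      pathOrderedExp n A r s * g s := by
  set A' : ℝ → Matrix (Fin n) (Fin n) ℂ := fun t => (g t)⁻¹ * A t * g t + (g t)⁻¹ * g' t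
  have hgc : Continuous g := continuous_iff_continuousAt.2 fun t => (hg t).continuousAt
  have hginv := hgc.matrix_inv_of_isUnit hunit
  have hA' : Continuous A' := ((hginv.mul hA).mul hgc).add (hginv.mul hg')
  have hgauge : ∀ (X : Matrix (Fin n) (Fin n) ℂ) t, X * A t * g t + X * g' t = X * g t * A' t :=
    fun X t => by
      simp [A', mul_add, mul_assoc,
        Matrix.mul_nonsing_inv_cancel_left _ _ ((Matrix.isUnit_iff_isUnit_det _).1 (hunit t))]
  refine eqOn_Icc_of_hasDerivWithinAt_mul_right (f := fun x => g r * pathOrderedExp n A' r x)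
    (g := fun x => pathOrderedExp n A r x * g x) hA'.continuousOn
    (continuousOn_const.mul (continuousOn_pathOrderedExp hA' r s)) (fun t ht => ?_)
    ((continuousOn_pathOrderedExp hA r s).mul hgc.continuousOn) (fun t ht => ?_) ?_ ⟨hrs, le_rfl⟩
  · simpa only [mul_assoc] using (hasDerivWithinAt_pathOrderedExp hA' ht.1).const_mul (g r)
  · exact ((hasDerivWithinAt_pathOrderedExp hA ht.1).mul (hg t).hasDerivWithinAt).congr_deriv
      (hgauge _ t)
  · simp [pathOrderedExp_self hA, pathOrderedExp_self hA']
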